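/- (Cut elimination with trailing context, statement SL of the main lemma) For all contexts G, H, I, all multisets Γ, Δ, Σ, Π and every formula A: if G ⇗ Γ ⇒ Δ,A ⇗ I and H ⇗ A,Σ ⇒ Π are both derivable in LNS_Kt, and the linear nested sequents G ⇗ Γ ⇒ Δ and H ⇗ A,Σ ⇒ Π are structurally equivalent, then (G ⊕ H) ⇗ Γ,Σ ⇒ Δ,Π ⇗ I is derivable in LNS_Kt. -/

import Mathlib

/-!
Weakening and contraction are height-preserving: derivability of a linear nested sequent depends
only on the supports of its components, which absorbs the duplicated contexts that merging creates.

Cut is eliminated by induction on the cut formula and, inside, on the sum of the heights of the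
premises, simultaneously for an empty and a nonempty trailing context. If the cut formula is not
principal in the left premise, the cut moves up the left premise; otherwise it moves up the right
one, and where the formula is principal in both it is replaced by cuts on its immediate
subformulas followed by a contraction. The one delicate case is a box formula, principal on the
left, that the right premise consumes in a non-final component by □L1: there the premise `ε ⇒ B`
of the left □R rule is first cut against the right premise.
-/

/-- Formulae of tense logic: atoms (indexed by naturals), ⊥, →, □, ◇, ■, ◆. -/
inductive Formula : Type
  | atom : ℕ → Formula
  | bot : Formula
  | imp : Formula → Formula → Formula
  | box : Formula → Formula
  | dia : Formula → Formula
  | bbox : Formula → Formula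
  | bdia : Formula → Formula

def Formula.neg (A : Formula) : Formula := A.imp .bot
def Formula.and (A B : Formula) : Formula := (A.imp B.neg).neg
def Formula.or (A B : Formula) : Formula := A.neg.imp B
def Formula.top : Formula := Formula.bot.imp .bot

/-- Formulas built from atoms, ⊥, →, □, ■ only (no diamonds). -/
def Formula.NoDia : Formula → Prop
  | .atom _ => True
  | .bot => True
  | .imp A B => A.NoDia ∧ B.NoDia
  | .box A => A.NoDia
  | .dia _ => False
  | .bbox A => A.NoDia
  | .bdia _ => False

/-- Structural connectives: `up` is ↗ and `dn` is ↙. -/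
inductive Dir : Type
  | up
  | dn

/-- Linear nested sequents: a nonempty list of components `Γ ⇒ Δ`
joined by the structural connectives ↗ (`up`) and ↙ (`dn`). -/
inductive LNS : Type
  | single (Γ Δ : Multiset Formula) : LNS
  | up (Γ Δ : Multiset Formula) (S : LNS) : LNS
  | dn (Γ Δ : Multiset Formula) (S : LNS) : LNS

/-- A (possibly empty) context: a list of components, each together with the
structural connective joining it to what follows. -/
abbrev Ctx := List (Multiset Formula × Multiset Formula × Dir)

/-- `plug G S` is the linear nested sequent `G ⇗ S` (just `S` when `G` is empty). -/
def plug : Ctx → LNS → LNS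
  | [], S => S
  | (Γ, Δ, Dir.up) :: G, S => LNS.up Γ Δ (plug G S)
  | (Γ, Δ, Dir.dn) :: G, S => LNS.dn Γ Δ (plug G S)

/-- The structural connective joining the context to what follows it (none if empty). -/
def lastDir : Ctx → Option Dir
  | [] => none
  | [(_, _, d)] => some d
  | _ :: G => lastDir G

/-- The calculus LNS_Kt. -/
inductive Deriv : LNS → Prop
  | id (G : Ctx) (Γ Δ : Multiset Formula) (p : ℕ) :
      Deriv (plug G (.single (.atom p ::ₘ Γ) (.atom p ::ₘ Δ)))
  | botL (G : Ctx) (Γ Δ : Multiset Formula) :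
      Deriv (plug G (.single (.bot ::ₘ Γ) Δ))
  | ew (G : Ctx) (Θ Λ : Multiset Formula) (d : Dir) (Γ Δ : Multiset Formula) :
      Deriv (plug G (.single Θ Λ)) →
      Deriv (plug (G ++ [(Θ, Λ, d)]) (.single Γ Δ))
  | impR (G : Ctx) (Γ Δ : Multiset Formula) (A B : Formula) :
      Deriv (plug G (.single (A ::ₘ Γ) (B ::ₘ A.imp B ::ₘ Δ))) →
      Deriv (plug G (.single Γ (A.imp B ::ₘ Δ)))
  | impL (G : Ctx) (Γ Δ : Multiset Formula) (A B : Formula) :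
      Deriv (plug G (.single (B ::ₘ A.imp B ::ₘ Γ) Δ)) →
      Deriv (plug G (.single (A.imp B ::ₘ Γ) (A ::ₘ Δ))) →
      Deriv (plug G (.single (A.imp B ::ₘ Γ) Δ))
  | boxR1 (G : Ctx) (Γ Δ Θ Λ : Multiset Formula) (A : Formula) :
      Deriv (plug G (.dn Γ (A ::ₘ Δ) (.single Θ (A.box ::ₘ Λ)))) →
      Deriv (plug G (.dn Γ Δ (.up Θ (A.box ::ₘ Λ) (.single 0 {A})))) →
      Deriv (plug G (.dn Γ Δ (.single Θ (A.box ::ₘ Λ))))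
  | bboxR1 (G : Ctx) (Γ Δ Θ Λ : Multiset Formula) (A : Formula) :
      Deriv (plug G (.up Γ (A ::ₘ Δ) (.single Θ (A.bbox ::ₘ Λ)))) →
      Deriv (plug G (.up Γ Δ (.dn Θ (A.bbox ::ₘ Λ) (.single 0 {A})))) →
      Deriv (plug G (.up Γ Δ (.single Θ (A.bbox ::ₘ Λ))))
  | boxR2 (G : Ctx) (Γ Δ : Multiset Formula) (A : Formula) :
      lastDir G ≠ some Dir.dn →
      Deriv (plug G (.up Γ (A.box ::ₘ Δ) (.single 0 {A}))) →
      Deriv (plug G (.single Γ (A.box ::ₘ Δ)))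
  | bboxR2 (G : Ctx) (Γ Δ : Multiset Formula) (A : Formula) :
      lastDir G ≠ some Dir.up →
      Deriv (plug G (.dn Γ (A.bbox ::ₘ Δ) (.single 0 {A}))) →
      Deriv (plug G (.single Γ (A.bbox ::ₘ Δ)))
  | boxL1 (G : Ctx) (Γ Δ Θ Λ : Multiset Formula) (A : Formula) :
      Deriv (plug G (.up (A.box ::ₘ Γ) Δ (.single (A ::ₘ Θ) Λ))) →
      Deriv (plug G (.up (A.box ::ₘ Γ) Δ (.single Θ Λ)))
  | bboxL1 (G : Ctx) (Γ Δ Θ Λ : Multiset Formula) (A : Formula) :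
      Deriv (plug G (.dn (A.bbox ::ₘ Γ) Δ (.single (A ::ₘ Θ) Λ))) →
      Deriv (plug G (.dn (A.bbox ::ₘ Γ) Δ (.single Θ Λ)))
  | boxL2 (G : Ctx) (Γ Δ Θ Λ : Multiset Formula) (A : Formula) :
      Deriv (plug G (.single (A ::ₘ Γ) Δ)) →
      Deriv (plug G (.dn Γ Δ (.single (A.box ::ₘ Θ) Λ)))
  | bboxL2 (G : Ctx) (Γ Δ Θ Λ : Multiset Formula) (A : Formula) :
      Deriv (plug G (.single (A ::ₘ Γ) Δ)) →
      Deriv (plug G (.up Γ Δ (.single (A.bbox ::ₘ Θ) Λ)))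

/-- Two linear nested sequents are structurally equivalent if they have the same
number of components joined by the same sequence of structural connectives. -/
def structEquiv : LNS → LNS → Prop
  | .single _ _, .single _ _ => True
  | .up _ _ S, .up _ _ T => structEquiv S T
  | .dn _ _ S, .dn _ _ T => structEquiv S T
  | _, _ => False

/-- The merge of two (structurally equivalent) linear nested sequents, taking
componentwise multiset unions of antecedents and succedents. -/
def merge : LNS → LNS → LNS
  | .single Γ Δ, .single Θ Λ => .single (Γ + Θ) (Δ + Λ)
  | .up Γ Δ S, .up Θ Λ T => .up (Γ + Θ) (Δ + Λ) (merge S T)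
  | .dn Γ Δ S, .dn Θ Λ T => .dn (Γ + Θ) (Δ + Λ) (merge S T)
  | S, _ => S

/-- A trailing context: a list of components, each preceded by the structural
connective joining it to what comes before. -/
abbrev TCtx := List (Dir × Multiset Formula × Multiset Formula)

/-- `withTail Γ Δ H` is the linear nested sequent `(Γ ⇒ Δ) ⇗ H`. -/
def withTail : Multiset Formula → Multiset Formula → TCtx → LNS
  | Γ, Δ, [] => .single Γ Δ
  | Γ, Δ, (Dir.up, Θ, Λ) :: H => .up Γ Δ (withTail Θ Λ H)
  | Γ, Δ, (Dir.dn, Θ, Λ) :: H => .dn Γ Δ (withTail Θ Λ H)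

/-- Append a component at the end of a linear nested sequent, joined by the
given structural connective. -/
def LNS.snoc : LNS → Dir → Multiset Formula → Multiset Formula → LNS
  | .single Γ' Δ', Dir.up, Γ, Δ => .up Γ' Δ' (.single Γ Δ)
  | .single Γ' Δ', Dir.dn, Γ, Δ => .dn Γ' Δ' (.single Γ Δ)
  | .up Γ' Δ' S, d, Γ, Δ => .up Γ' Δ' (S.snoc d Γ Δ)
  | .dn Γ' Δ' S, d, Γ, Δ => .dn Γ' Δ' (S.snoc d Γ Δ)

/-- `appendT S I` is the linear nested sequent `S ⇗ I` (append the trailing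
context `I` at the end of `S`). -/
def appendT (S : LNS) (I : TCtx) : LNS :=
  I.foldl (fun S x => S.snoc x.1 x.2.1 x.2.2) S

section Multiset

variable {α : Type*} {s t u : Multiset α}

theorem Multiset.add_subset (hs : s ⊆ u) (ht : t ⊆ u) : s + t ⊆ u :=
  fun _ h => (Multiset.mem_add.1 h).elim (fun h => hs h) (fun h => ht h)

theorem Multiset.add_subset_add_left (s : Multiset α) (h : t ⊆ u) : s + t ⊆ s + u :=
  Multiset.add_subset Multiset.subset_add_left (Multiset.Subset.trans h Multiset.subset_add_right)

theorem Multiset.add_self_subset (s : Multiset α) : s + s ⊆ s :=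
  Multiset.add_subset (.refl s) (.refl s)

end Multiset

def Dir.flip : Dir → Dir
  | .up => .dn
  | .dn => .up

/-- `Dir.up.box A = □A` and `Dir.dn.box A = ■A`: each pair of rules for `□` and `■` becomes one
rule parametrised by the direction `d` of the component that the right rules create. -/
def Dir.box : Dir → Formula → Formula
  | .up, A => A.box
  | .dn, A => A.bbox

theorem Dir.box_inj {d e : Dir} {A B : Formula} : d.box A = e.box B ↔ d = e ∧ A = B := by
  cases d <;> cases e <;> simp [Dir.box]

theorem Dir.sizeOf_lt_box (d : Dir) (A : Formula) : sizeOf A < sizeOf (d.box A) := by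
  cases d <;> simp [Dir.box]

def dirs (G : Ctx) : List Dir := G.map (·.2.2)

@[simp] theorem dirs_nil : dirs [] = [] := rfl

@[simp] theorem dirs_append (G H : Ctx) : dirs (G ++ H) = dirs G ++ dirs H := List.map_append

@[simp] theorem dirs_cons (x : Multiset Formula × Multiset Formula × Dir) (G : Ctx) :
    dirs (x :: G) = x.2.2 :: dirs G := rfl

theorem lastDir_eq_getLast? (G : Ctx) : lastDir G = (dirs G).getLast? := by
  induction G with
  | nil => rfl
  | cons x G ih =>
    cases G with
    | nil => rfl
    | cons y G => rw [show lastDir (x :: y :: G) = lastDir (y :: G) from rfl, ih]; simp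

theorem lastDir_congr {G H : Ctx} (h : dirs G = dirs H) : lastDir G = lastDir H := by
  rw [lastDir_eq_getLast?, lastDir_eq_getLast?, h]

theorem exists_eq_concat_of_dirs_eq_concat {G : Ctx} {L : List Dir} {d : Dir}
    (h : dirs G = L ++ [d]) : ∃ G₀ a b, G = G₀ ++ [(a, b, d)] ∧ dirs G₀ = L := by
  rcases List.eq_nil_or_concat' G with rfl | ⟨G₀, ⟨a, b, e⟩, rfl⟩
  · simp at h
  · obtain ⟨h₀, rfl⟩ := List.append_singleton_inj.1 (by simpa using h)
    exact ⟨G₀, a, b, rfl, h₀⟩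

theorem length_eq_of_dirs_eq {G H : Ctx} (h : dirs G = dirs H) : G.length = H.length := by
  simpa [dirs] using congrArg List.length h

/-- The merge `G ⊕ H`; the structural connectives are read off `G`. -/
def Ctx.merge (G H : Ctx) : Ctx :=
  List.zipWith (fun x y => (x.1 + y.1, x.2.1 + y.2.1, x.2.2)) G H

theorem Ctx.merge_concat {G H : Ctx} (h : G.length = H.length) (x y) :
    Ctx.merge (G ++ [x]) (H ++ [y]) = Ctx.merge G H ++ [(x.1 + y.1, x.2.1 + y.2.1, x.2.2)] := by
  simp [Ctx.merge, List.zipWith_append h]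

theorem dirs_merge {G H : Ctx} (h : dirs G = dirs H) : dirs (Ctx.merge G H) = dirs G := by
  induction G generalizing H with
  | nil => rfl
  | cons x G ih =>
    cases H with
    | nil => simp at h
    | cons y H =>
      simp only [dirs_cons, List.cons.injEq] at h
      simp [Ctx.merge, ← ih h.2]

theorem Ctx.merge_concat_left {G₀ H : Ctx} {x} (h : dirs (G₀ ++ [x]) = dirs H) :
    ∃ H₀ a b, H = H₀ ++ [(a, b, x.2.2)] ∧ dirs G₀ = dirs H₀ ∧
      Ctx.merge (G₀ ++ [x]) H = Ctx.merge G₀ H₀ ++ [(x.1 + a, x.2.1 + b, x.2.2)] := by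
  obtain ⟨H₀, a, b, rfl, hd⟩ := exists_eq_concat_of_dirs_eq_concat (by simpa using h.symm)
  exact ⟨H₀, a, b, rfl, hd.symm, Ctx.merge_concat (length_eq_of_dirs_eq hd.symm) _ _⟩

theorem Ctx.merge_concat_right {G H₀ : Ctx} {y} (h : dirs G = dirs (H₀ ++ [y])) :
    ∃ G₀ a b, G = G₀ ++ [(a, b, y.2.2)] ∧ dirs G₀ = dirs H₀ ∧
      Ctx.merge G (H₀ ++ [y]) = Ctx.merge G₀ H₀ ++ [(a + y.1, b + y.2.1, y.2.2)] := by
  obtain ⟨G₀, a, b, rfl, hd⟩ := exists_eq_concat_of_dirs_eq_concat (by simpa using h)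
  exact ⟨G₀, a, b, rfl, hd, Ctx.merge_concat (length_eq_of_dirs_eq hd) _ _⟩

def Ctx.Subset : Ctx → Ctx → Prop :=
  List.Forall₂ fun x y => x.1 ⊆ y.1 ∧ x.2.1 ⊆ y.2.1 ∧ x.2.2 = y.2.2

namespace Ctx.Subset

theorem refl (G : Ctx) : Ctx.Subset G G :=
  List.forall₂_same.2 fun _ _ => ⟨.refl _, .refl _, rfl⟩

theorem dirs_eq {G H : Ctx} (h : Ctx.Subset G H) : dirs G = dirs H := by
  induction h with
  | nil => rfl
  | cons hxy _ ih => simp [hxy.2.2, ih]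

theorem concat {G H : Ctx} {a b c e : Multiset Formula} {d : Dir} (h : Ctx.Subset G H)
    (hac : a ⊆ c) (hbe : b ⊆ e) : Ctx.Subset (G ++ [(a, b, d)]) (H ++ [(c, e, d)]) :=
  List.rel_append h (.cons ⟨hac, hbe, rfl⟩ .nil)

theorem exists_of_concat {G H : Ctx} {a b : Multiset Formula} {d : Dir}
    (h : Ctx.Subset (G ++ [(a, b, d)]) H) :
    ∃ H₀ c e, H = H₀ ++ [(c, e, d)] ∧ Ctx.Subset G H₀ ∧ a ⊆ c ∧ b ⊆ e := by
  induction G generalizing H with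
  | nil =>
    obtain ⟨⟨c, e, d'⟩, H, ⟨hac, hbe, rfl⟩, hH, rfl⟩ := List.forall₂_cons_left_iff.1 h
    obtain rfl := List.forall₂_nil_left_iff.1 hH
    exact ⟨[], c, e, rfl, .nil, hac, hbe⟩
  | cons x G ih =>
    obtain ⟨y, H, hxy, hH, rfl⟩ := List.forall₂_cons_left_iff.1 h
    obtain ⟨H₀, c, e, rfl, hG, hac, hbe⟩ := ih hH
    exact ⟨y :: H₀, c, e, rfl, .cons hxy hG, hac, hbe⟩

theorem merge {G H K : Ctx} (hG : Ctx.Subset G K) (hH : Ctx.Subset H K) :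
    Ctx.Subset (Ctx.merge G H) K := by
  induction hG generalizing H with
  | nil => exact .nil
  | cons hxz _ ih =>
    cases hH with
    | cons hyz hH =>
      exact .cons ⟨Multiset.add_subset hxz.1 hyz.1,
        Multiset.add_subset hxz.2.1 hyz.2.1, hxz.2.2⟩ (ih hH)

end Ctx.Subset

theorem Ctx.subset_merge_left {G H : Ctx} (h : dirs G = dirs H) :
    Ctx.Subset G (Ctx.merge G H) := by
  induction G generalizing H with
  | nil => exact .nil
  | cons x G ih =>
    cases H with
    | nil => simp at h
    | cons y H =>
      simp only [dirs_cons, List.cons.injEq] at h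
      exact .cons ⟨Multiset.subset_add_left, Multiset.subset_add_left, rfl⟩ (ih h.2)

theorem Ctx.subset_merge_right {G H : Ctx} (h : dirs G = dirs H) :
    Ctx.Subset H (Ctx.merge G H) := by
  induction G generalizing H with
  | nil => cases H with
    | nil => exact .nil
    | cons y H => simp at h
  | cons x G ih =>
    cases H with
    | nil => simp at h
    | cons y H =>
      simp only [dirs_cons, List.cons.injEq] at h
      exact .cons ⟨Multiset.subset_add_right, Multiset.subset_add_right, h.1.symm⟩ (ih h.2)

/-- `HDeriv n G Γ Δ`: the linear nested sequent `plug G (Γ ⇒ Δ)` has a derivation of height at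
most `n` in LNS_Kt, whose rules all act on the last component. -/
inductive HDeriv : ℕ → Ctx → Multiset Formula → Multiset Formula → Prop
  | id (n : ℕ) (G : Ctx) (Γ Δ : Multiset Formula) (p : ℕ) :
      HDeriv n G (.atom p ::ₘ Γ) (.atom p ::ₘ Δ)
  | botL (n : ℕ) (G : Ctx) (Γ Δ : Multiset Formula) : HDeriv n G (.bot ::ₘ Γ) Δ
  | ew {n G Θ Λ} (d : Dir) (Γ Δ : Multiset Formula) :
      HDeriv n G Θ Λ → HDeriv (n + 1) (G ++ [(Θ, Λ, d)]) Γ Δ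
  | impR {n G Γ Δ A B} :
      HDeriv n G (A ::ₘ Γ) (B ::ₘ A.imp B ::ₘ Δ) → HDeriv (n + 1) G Γ (A.imp B ::ₘ Δ)
  | impL {n G Γ Δ A B} :
      HDeriv n G (B ::ₘ A.imp B ::ₘ Γ) Δ → HDeriv n G (A.imp B ::ₘ Γ) (A ::ₘ Δ) →
      HDeriv (n + 1) G (A.imp B ::ₘ Γ) Δ
  | boxR1 {n G Γ Δ Θ Λ A} (d : Dir) :
      HDeriv n (G ++ [(Γ, A ::ₘ Δ, d.flip)]) Θ (d.box A ::ₘ Λ) →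
      HDeriv n (G ++ [(Γ, Δ, d.flip), (Θ, d.box A ::ₘ Λ, d)]) 0 {A} →
      HDeriv (n + 1) (G ++ [(Γ, Δ, d.flip)]) Θ (d.box A ::ₘ Λ)
  | boxR2 {n G Γ Δ A} (d : Dir) :
      lastDir G ≠ some d.flip → HDeriv n (G ++ [(Γ, d.box A ::ₘ Δ, d)]) 0 {A} →
      HDeriv (n + 1) G Γ (d.box A ::ₘ Δ)
  | boxL1 {n G Γ Δ Θ Λ A} (d : Dir) :
      HDeriv n (G ++ [(d.box A ::ₘ Γ, Δ, d)]) (A ::ₘ Θ) Λ →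
      HDeriv (n + 1) (G ++ [(d.box A ::ₘ Γ, Δ, d)]) Θ Λ
  | boxL2 {n G Γ Δ A} (d : Dir) (Θ Λ : Multiset Formula) :
      HDeriv n G (A ::ₘ Γ) Δ → HDeriv (n + 1) (G ++ [(Γ, Δ, d.flip)]) (d.box A ::ₘ Θ) Λ

theorem HDeriv.mono {n m : ℕ} {G : Ctx} {Γ Δ : Multiset Formula} (h : HDeriv n G Γ Δ)
    (hnm : n ≤ m) : HDeriv m G Γ Δ := by
  induction h generalizing m with
  | id => exact .id ..
  | botL => exact .botL ..
  | ew d Γ Δ _ ih => cases m <;> [omega; exact .ew d Γ Δ (ih (by omega))]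
  | impR _ ih => cases m <;> [omega; exact .impR (ih (by omega))]
  | impL _ _ ih₁ ih₂ => cases m <;> [omega; exact .impL (ih₁ (by omega)) (ih₂ (by omega))]
  | boxR1 d _ _ ih₁ ih₂ => cases m <;> [omega; exact .boxR1 d (ih₁ (by omega)) (ih₂ (by omega))]
  | boxR2 d hG _ ih => cases m <;> [omega; exact .boxR2 d hG (ih (by omega))]
  | boxL1 d _ ih => cases m <;> [omega; exact .boxL1 d (ih (by omega))]
  | boxL2 d Θ Λ _ ih => cases m <;> [omega; exact .boxL2 d Θ Λ (ih (by omega))]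

/-- Height-preserving weakening and contraction at once. -/
theorem HDeriv.of_subset {n : ℕ} {X : Ctx} {a b : Multiset Formula} (h : HDeriv n X a b) :
    ∀ {G Γ Δ}, Ctx.Subset X G → a ⊆ Γ → b ⊆ Δ → HDeriv n G Γ Δ := by
  induction h with
  | id n X a b p =>
    intro G Γ Δ _ ha hb
    obtain ⟨Γ, rfl⟩ := Multiset.exists_cons_of_mem (ha (Multiset.mem_cons_self _ _))
    obtain ⟨Δ, rfl⟩ := Multiset.exists_cons_of_mem (hb (Multiset.mem_cons_self _ _))
    exact .id ..
  | botL n X a b =>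
    intro G Γ Δ _ ha _
    obtain ⟨Γ, rfl⟩ := Multiset.exists_cons_of_mem (ha (Multiset.mem_cons_self _ _))
    exact .botL ..
  | ew d a b _ ih =>
    intro G Γ Δ hX _ _
    obtain ⟨G, c, e, rfl, hG, hc, he⟩ := hX.exists_of_concat
    exact .ew d Γ Δ (ih hG hc he)
  | impR _ ih =>
    intro G Γ Δ hX ha hb
    obtain ⟨Δ, rfl⟩ := Multiset.exists_cons_of_mem (hb (Multiset.mem_cons_self _ _))
    exact .impR (ih hX (Multiset.cons_subset_cons ha) (Multiset.cons_subset_cons hb))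
  | impL _ _ ih₁ ih₂ =>
    intro G Γ Δ hX ha hb
    obtain ⟨Γ, rfl⟩ := Multiset.exists_cons_of_mem (ha (Multiset.mem_cons_self _ _))
    exact .impL (ih₁ hX (Multiset.cons_subset_cons ha) hb)
      (ih₂ hX ha (Multiset.cons_subset_cons hb))
  | boxR1 d _ _ ih₁ ih₂ =>
    intro G Γ Δ hX ha hb
    obtain ⟨G, c, e, rfl, hG, hc, he⟩ := hX.exists_of_concat
    obtain ⟨Δ, rfl⟩ := Multiset.exists_cons_of_mem (hb (Multiset.mem_cons_self _ _))
    refine .boxR1 d (ih₁ (hG.concat hc (Multiset.cons_subset_cons he)) ha hb)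
      (ih₂ ?_ (.refl _) (.refl _))
    simpa using (hG.concat hc he).concat ha hb
  | boxR2 d hlast _ ih =>
    intro G Γ Δ hX ha hb
    obtain ⟨Δ, rfl⟩ := Multiset.exists_cons_of_mem (hb (Multiset.mem_cons_self _ _))
    rw [lastDir_congr hX.dirs_eq] at hlast
    exact .boxR2 d hlast (ih (hX.concat ha hb) (.refl _) (.refl _))
  | boxL1 d _ ih =>
    intro G Γ Δ hX ha hb
    obtain ⟨G, c, e, rfl, hG, hc, he⟩ := hX.exists_of_concat
    obtain ⟨c, rfl⟩ := Multiset.exists_cons_of_mem (hc (Multiset.mem_cons_self _ _))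
    exact .boxL1 d (ih (hG.concat hc he) (Multiset.cons_subset_cons ha) hb)
  | boxL2 d Θ Λ _ ih =>
    intro G Γ Δ hX ha _
    obtain ⟨G, c, e, rfl, hG, hc, he⟩ := hX.exists_of_concat
    obtain ⟨Γ, rfl⟩ := Multiset.exists_cons_of_mem (ha (Multiset.mem_cons_self _ _))
    exact .boxL2 d Γ Δ (ih hG (Multiset.cons_subset_cons hc) he)

def FDeriv (G : Ctx) (Γ Δ : Multiset Formula) : Prop := ∃ n, HDeriv n G Γ Δ

namespace FDeriv

variable {G : Ctx} {Γ Δ Θ Λ : Multiset Formula} {A B : Formula}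

theorem id (G : Ctx) (Γ Δ : Multiset Formula) (p : ℕ) : FDeriv G (.atom p ::ₘ Γ) (.atom p ::ₘ Δ) :=
  ⟨0, .id ..⟩

theorem botL (G : Ctx) (Γ Δ : Multiset Formula) : FDeriv G (.bot ::ₘ Γ) Δ := ⟨0, .botL ..⟩

theorem ew (d : Dir) (Γ Δ : Multiset Formula) (h : FDeriv G Θ Λ) :
    FDeriv (G ++ [(Θ, Λ, d)]) Γ Δ :=
  let ⟨n, h⟩ := h; ⟨n + 1, .ew d Γ Δ h⟩

theorem impR (h : FDeriv G (A ::ₘ Γ) (B ::ₘ A.imp B ::ₘ Δ)) : FDeriv G Γ (A.imp B ::ₘ Δ) :=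
  let ⟨n, h⟩ := h; ⟨n + 1, .impR h⟩

theorem impL (h₁ : FDeriv G (B ::ₘ A.imp B ::ₘ Γ) Δ) (h₂ : FDeriv G (A.imp B ::ₘ Γ) (A ::ₘ Δ)) :
    FDeriv G (A.imp B ::ₘ Γ) Δ :=
  let ⟨n, h₁⟩ := h₁; let ⟨m, h₂⟩ := h₂
  ⟨max n m + 1, .impL (h₁.mono (le_max_left n m)) (h₂.mono (le_max_right n m))⟩

theorem boxR1 (d : Dir) (h₁ : FDeriv (G ++ [(Γ, A ::ₘ Δ, d.flip)]) Θ (d.box A ::ₘ Λ))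
    (h₂ : FDeriv (G ++ [(Γ, Δ, d.flip), (Θ, d.box A ::ₘ Λ, d)]) 0 {A}) :
    FDeriv (G ++ [(Γ, Δ, d.flip)]) Θ (d.box A ::ₘ Λ) :=
  let ⟨n, h₁⟩ := h₁; let ⟨m, h₂⟩ := h₂
  ⟨max n m + 1, .boxR1 d (h₁.mono (le_max_left n m)) (h₂.mono (le_max_right n m))⟩

theorem boxR2 (d : Dir) (hG : lastDir G ≠ some d.flip)
    (h : FDeriv (G ++ [(Γ, d.box A ::ₘ Δ, d)]) 0 {A}) : FDeriv G Γ (d.box A ::ₘ Δ) :=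
  let ⟨n, h⟩ := h; ⟨n + 1, .boxR2 d hG h⟩

theorem boxL1 (d : Dir) (h : FDeriv (G ++ [(d.box A ::ₘ Γ, Δ, d)]) (A ::ₘ Θ) Λ) :
    FDeriv (G ++ [(d.box A ::ₘ Γ, Δ, d)]) Θ Λ :=
  let ⟨n, h⟩ := h; ⟨n + 1, .boxL1 d h⟩

theorem boxL2 (d : Dir) (Θ Λ : Multiset Formula) (h : FDeriv G (A ::ₘ Γ) Δ) :
    FDeriv (G ++ [(Γ, Δ, d.flip)]) (d.box A ::ₘ Θ) Λ :=
  let ⟨n, h⟩ := h; ⟨n + 1, .boxL2 d Θ Λ h⟩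

theorem of_subset {G' : Ctx} {Γ' Δ' : Multiset Formula} (h : FDeriv G Γ Δ)
    (hG : Ctx.Subset G G') (hΓ : Γ ⊆ Γ') (hΔ : Δ ⊆ Δ') : FDeriv G' Γ' Δ' :=
  h.imp fun _ h => h.of_subset hG hΓ hΔ

end FDeriv

theorem plug_append (G H : Ctx) (S : LNS) : plug (G ++ H) S = plug G (plug H S) := by
  induction G with
  | nil => rfl
  | cons x G ih => obtain ⟨a, b, d | d⟩ := x <;> simp [plug, ih]

theorem plug_single_inj {G G' : Ctx} {Γ Δ Γ' Δ' : Multiset Formula}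
    (h : plug G (.single Γ Δ) = plug G' (.single Γ' Δ')) : G = G' ∧ Γ = Γ' ∧ Δ = Δ' := by
  induction G generalizing G' with
  | nil => cases G' with
    | nil => simpa [plug] using h
    | cons y G' => obtain ⟨c, e, d | d⟩ := y <;> simp [plug] at h
  | cons x G ih =>
    obtain ⟨c, e, d | d⟩ := x <;> cases G' with
    | nil => simp [plug] at h
    | cons y G' =>
      obtain ⟨c', e', d' | d'⟩ := y <;>
        simp only [plug, LNS.up.injEq, LNS.dn.injEq, reduceCtorEq] at h
      all_goals obtain ⟨rfl, rfl, h⟩ := h; simp [ih h]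

theorem HDeriv.toDeriv {n : ℕ} {G : Ctx} {Γ Δ : Multiset Formula} (h : HDeriv n G Γ Δ) :
    Deriv (plug G (.single Γ Δ)) := by
  induction h with
  | id => exact .id ..
  | botL => exact .botL ..
  | ew d Γ Δ _ ih => exact .ew _ _ _ d Γ Δ ih
  | impR _ ih => exact .impR _ _ _ _ _ ih
  | impL _ _ ih₁ ih₂ => exact .impL _ _ _ _ _ ih₁ ih₂
  | boxR1 d _ _ ih₁ ih₂ =>
    simp only [plug_append] at *
    cases d
    exacts [.boxR1 _ _ _ _ _ _ ih₁ ih₂, .bboxR1 _ _ _ _ _ _ ih₁ ih₂]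
  | boxR2 d hG _ ih =>
    rw [plug_append] at ih
    cases d
    exacts [.boxR2 _ _ _ _ hG ih, .bboxR2 _ _ _ _ hG ih]
  | boxL1 d _ ih =>
    simp only [plug_append] at *
    cases d
    exacts [.boxL1 _ _ _ _ _ _ ih, .bboxL1 _ _ _ _ _ _ ih]
  | boxL2 d Θ Λ _ ih =>
    rw [plug_append]
    cases d
    exacts [.boxL2 _ _ _ _ _ _ ih, .bboxL2 _ _ _ _ _ _ ih]

theorem plug_concat_up (G : Ctx) (a b : Multiset Formula) (S : LNS) :
    plug (G ++ [(a, b, .up)]) S = plug G (.up a b S) :=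
  plug_append ..

theorem plug_concat_dn (G : Ctx) (a b : Multiset Formula) (S : LNS) :
    plug (G ++ [(a, b, .dn)]) S = plug G (.dn a b S) :=
  plug_append ..

theorem Deriv.fDeriv {S : LNS} (h : Deriv S) :
    ∀ {G Γ Δ}, S = plug G (.single Γ Δ) → FDeriv G Γ Δ := by
  induction h with
  | id =>
    intro _ _ _ h; obtain ⟨rfl, rfl, rfl⟩ := plug_single_inj h.symm; exact .id ..
  | botL =>
    intro _ _ _ h; obtain ⟨rfl, rfl, rfl⟩ := plug_single_inj h.symm; exact .botL ..
  | ew _ _ _ d _ _ _ ih =>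
    intro _ _ _ h; obtain ⟨rfl, rfl, rfl⟩ := plug_single_inj h.symm; exact .ew d _ _ (ih rfl)
  | impR _ _ _ _ _ _ ih =>
    intro _ _ _ h; obtain ⟨rfl, rfl, rfl⟩ := plug_single_inj h.symm; exact .impR (ih rfl)
  | impL _ _ _ _ _ _ _ ih₁ ih₂ =>
    intro _ _ _ h; obtain ⟨rfl, rfl, rfl⟩ := plug_single_inj h.symm
    exact .impL (ih₁ rfl) (ih₂ rfl)
  | boxR1 G _ _ _ _ _ _ _ ih₁ ih₂ =>
    intro _ _ _ h; rw [← plug_concat_dn] at h; obtain ⟨rfl, rfl, rfl⟩ := plug_single_inj h.symm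
    exact .boxR1 .up (ih₁ (plug_concat_dn ..).symm) (ih₂ (by rw [plug_append]; rfl))
  | bboxR1 G _ _ _ _ _ _ _ ih₁ ih₂ =>
    intro _ _ _ h; rw [← plug_concat_up] at h; obtain ⟨rfl, rfl, rfl⟩ := plug_single_inj h.symm
    exact .boxR1 .dn (ih₁ (plug_concat_up ..).symm) (ih₂ (by rw [plug_append]; rfl))
  | boxR2 _ _ _ _ hG _ ih =>
    intro _ _ _ h; obtain ⟨rfl, rfl, rfl⟩ := plug_single_inj h.symm
    exact .boxR2 .up hG (ih (plug_concat_up ..).symm)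
  | bboxR2 _ _ _ _ hG _ ih =>
    intro _ _ _ h; obtain ⟨rfl, rfl, rfl⟩ := plug_single_inj h.symm
    exact .boxR2 .dn hG (ih (plug_concat_dn ..).symm)
  | boxL1 _ _ _ _ _ _ _ ih =>
    intro _ _ _ h; rw [← plug_concat_up] at h; obtain ⟨rfl, rfl, rfl⟩ := plug_single_inj h.symm
    exact .boxL1 .up (ih (plug_concat_up ..).symm)
  | bboxL1 _ _ _ _ _ _ _ ih =>
    intro _ _ _ h; rw [← plug_concat_dn] at h; obtain ⟨rfl, rfl, rfl⟩ := plug_single_inj h.symm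
    exact .boxL1 .dn (ih (plug_concat_dn ..).symm)
  | boxL2 _ _ _ _ _ _ _ ih =>
    intro _ _ _ h; rw [← plug_concat_dn] at h; obtain ⟨rfl, rfl, rfl⟩ := plug_single_inj h.symm
    exact .boxL2 .up _ _ (ih rfl)
  | bboxL2 _ _ _ _ _ _ _ ih =>
    intro _ _ _ h; rw [← plug_concat_up] at h; obtain ⟨rfl, rfl, rfl⟩ := plug_single_inj h.symm
    exact .boxL2 .dn _ _ (ih rfl)

theorem FDeriv.toDeriv {G : Ctx} {Γ Δ : Multiset Formula} (h : FDeriv G Γ Δ) :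
    Deriv (plug G (.single Γ Δ)) :=
  let ⟨_, h⟩ := h; h.toDeriv

theorem List.append_cons_eq_append_singleton {α : Type*} {G K Y : List α} {p e : α}
    (h : G ++ p :: K = Y ++ [e]) :
    K = [] ∧ Y = G ∧ p = e ∨ ∃ K₀, K = K₀ ++ [e] ∧ Y = G ++ p :: K₀ := by
  rcases List.eq_nil_or_concat' K with rfl | ⟨K₀, k, rfl⟩
  · obtain ⟨rfl, rfl⟩ := List.append_singleton_inj.1 h
    exact .inl ⟨rfl, rfl, rfl⟩
  · have h' : (G ++ p :: K₀) ++ [k] = Y ++ [e] := by rw [← h]; simp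
    obtain ⟨rfl, rfl⟩ := List.append_singleton_inj.1 h'
    exact .inr ⟨K₀, rfl, rfl⟩

-- Statement SL for premises of heights `n` and `m`, with an empty (`CutFinal`) and a nonempty
-- (`CutTrailing`) trailing context `I`.
def CutFinal (A : Formula) (n m : ℕ) : Prop :=
  ∀ {G H : Ctx} {Γ Δ Θ Λ : Multiset Formula}, dirs G = dirs H →
    HDeriv n G Γ (A ::ₘ Δ) → HDeriv m H (A ::ₘ Θ) Λ → FDeriv (Ctx.merge G H) (Γ + Θ) (Δ + Λ)

def CutTrailing (A : Formula) (n m : ℕ) : Prop :=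
  ∀ {G H : Ctx} {Γ Δ Θ Λ : Multiset Formula} {d : Dir} {K : Ctx} {a b : Multiset Formula},
    dirs G = dirs H → HDeriv n (G ++ (Γ, A ::ₘ Δ, d) :: K) a b → HDeriv m H (A ::ₘ Θ) Λ →
    FDeriv (Ctx.merge G H ++ (Γ + Θ, Δ + Λ, d) :: K) a b

def Cut (A : Formula) (n m : ℕ) : Prop := CutFinal A n m ∧ CutTrailing A n m

def CutBelow (A : Formula) (s : ℕ) : Prop :=
  (∀ B, sizeOf B < sizeOf A → ∀ n m, Cut B n m) ∧ ∀ n m, n + m < s → Cut A n m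

theorem FDeriv.cut {B : Formula} (hB : ∀ n m, Cut B n m) {G H : Ctx}
    {Γ Δ Θ Λ : Multiset Formula} (hd : dirs G = dirs H) (h₁ : FDeriv G Γ (B ::ₘ Δ))
    (h₂ : FDeriv H (B ::ₘ Θ) Λ) : FDeriv (Ctx.merge G H) (Γ + Θ) (Δ + Λ) :=
  let ⟨_, h₁⟩ := h₁; let ⟨_, h₂⟩ := h₂; (hB _ _).1 hd h₁ h₂

theorem FDeriv.cut_trailing {B : Formula} (hB : ∀ n m, Cut B n m) {G H K : Ctx}
    {Γ Δ Θ Λ a b : Multiset Formula} {d : Dir} (hd : dirs G = dirs H)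
    (h₁ : FDeriv (G ++ (Γ, B ::ₘ Δ, d) :: K) a b) (h₂ : FDeriv H (B ::ₘ Θ) Λ) :
    FDeriv (Ctx.merge G H ++ (Γ + Θ, Δ + Λ, d) :: K) a b :=
  let ⟨_, h₁⟩ := h₁; let ⟨_, h₂⟩ := h₂; (hB _ _).2 hd h₁ h₂

theorem cutTrailing_of_lt {A : Formula} {n m : ℕ} (ih : ∀ n₀ < n, Cut A n₀ m) :
    CutTrailing A n m := by
  intro G H Γ Δ Θ Λ d K a b hd h1 h2
  generalize hX : G ++ (Γ, A ::ₘ Δ, d) :: K = X at h1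
  cases h1 with
  | id => exact .id ..
  | botL => exact .botL ..
  | ew e a b hq =>
    rcases List.append_cons_eq_append_singleton hX with ⟨rfl, rfl, he⟩ | ⟨K₀, rfl, rfl⟩
    · simp only [Prod.mk.injEq] at he
      obtain ⟨rfl, rfl, rfl⟩ := he
      exact .ew d a b ((ih _ (by omega)).1 hd hq h2)
    · rw [← List.cons_append, ← List.append_assoc]
      exact .ew e a b ((ih _ (by omega)).2 hd hq h2)
  | impR hq =>
    subst hX
    exact .impR ((ih _ (by omega)).2 hd hq h2)
  | impL hq₁ hq₂ =>
    subst hX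
    exact .impL ((ih _ (by omega)).2 hd hq₁ h2) ((ih _ (by omega)).2 hd hq₂ h2)
  | boxR1 e hq₁ hq₂ =>
    rcases List.append_cons_eq_append_singleton hX with ⟨rfl, rfl, he⟩ | ⟨K₀, rfl, rfl⟩
    · simp only [Prod.mk.injEq] at he
      obtain ⟨rfl, rfl, rfl⟩ := he
      rw [Multiset.cons_swap] at hq₁
      have c₁ := (ih _ (by omega)).2 hd hq₁ h2
      rw [Multiset.cons_add] at c₁
      exact .boxR1 e c₁ ((ih _ (by omega)).2 hd hq₂ h2)
    · simp only [List.append_assoc, List.cons_append] at hq₁ hq₂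
      rw [← List.cons_append, ← List.append_assoc]
      exact .boxR1 e (by simpa using (ih _ (by omega)).2 hd hq₁ h2)
        (by simpa using (ih _ (by omega)).2 hd hq₂ h2)
  | boxR2 e hlast hq =>
    subst hX
    simp only [List.append_assoc, List.cons_append] at hq
    refine .boxR2 e ?_ (by simpa using (ih _ (by omega)).2 hd hq h2)
    rwa [lastDir_congr (H := G ++ (Γ, A ::ₘ Δ, d) :: K) (by simp [dirs_merge hd, hd])]
  | boxL1 e hq =>
    rcases List.append_cons_eq_append_singleton hX with ⟨rfl, rfl, he⟩ | ⟨K₀, rfl, rfl⟩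
    · simp only [Prod.mk.injEq] at he
      obtain ⟨rfl, rfl, rfl⟩ := he
      have c := (ih _ (by omega)).2 hd hq h2
      rw [Multiset.cons_add] at c ⊢
      exact .boxL1 _ c
    · simp only [List.append_assoc, List.cons_append] at hq
      rw [← List.cons_append, ← List.append_assoc]
      exact .boxL1 e (by simpa using (ih _ (by omega)).2 hd hq h2)
  | boxL2 e a b hq =>
    rcases List.append_cons_eq_append_singleton hX with ⟨rfl, rfl, he⟩ | ⟨K₀, rfl, rfl⟩
    · simp only [Prod.mk.injEq] at he
      obtain ⟨rfl, rfl, rfl⟩ := he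
      have c := (ih _ (by omega)).1 hd hq h2
      rw [Multiset.cons_add] at c
      exact .boxL2 e a b c
    · rw [← List.cons_append, ← List.append_assoc]
      exact .boxL2 e a b ((ih _ (by omega)).2 hd hq h2)

/-- In a non-final component of the right premise, `A` can only be used by a rule `boxL1`
consuming it; `hP` is the cut of the premise `ε ⇒ B` of the right box rule that introduced `A` in
the left premise. -/
theorem cut_ctx {A : Formula} {N m : ℕ} {G H : Ctx} {Γ Δ Θ Λ : Multiset Formula} {d : Dir}
    (ih : CutBelow A (N + m)) (h1 : HDeriv N G Γ (A ::ₘ Δ)) (hd : dirs G = dirs H)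
    (hP : ∀ B, A = d.box B → FDeriv (Ctx.merge G H ++ [(Γ + Θ, Δ + Λ, d)]) 0 {B}) :
    ∀ k < m, ∀ {Λ' K a b}, Λ ⊆ Λ' → HDeriv k (H ++ (A ::ₘ Θ, Λ', d) :: K) a b →
      FDeriv (Ctx.merge G H ++ (Γ + Θ, Δ + Λ', d) :: K) a b := by
  intro k
  induction k using Nat.strong_induction_on with
  | _ k IHk =>
  intro hk Λ' K a b hΛ h3
  generalize hX : H ++ (A ::ₘ Θ, Λ', d) :: K = X at h3
  cases h3 with
  | id => exact .id ..
  | botL => exact .botL ..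
  | ew e a b hq =>
    rcases List.append_cons_eq_append_singleton hX with ⟨rfl, rfl, he⟩ | ⟨K₀, rfl, rfl⟩
    · simp only [Prod.mk.injEq] at he
      obtain ⟨rfl, rfl, rfl⟩ := he
      exact .ew d a b ((ih.2 N _ (by omega)).1 hd h1 hq)
    · rw [← List.cons_append, ← List.append_assoc]
      exact .ew e a b (IHk _ (by omega) (by omega) hΛ hq)
  | impR hq =>
    subst hX
    exact .impR (IHk _ (by omega) (by omega) hΛ hq)
  | impL hq₁ hq₂ =>
    subst hX
    exact .impL (IHk _ (by omega) (by omega) hΛ hq₁) (IHk _ (by omega) (by omega) hΛ hq₂)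
  | boxR1 e hq₁ hq₂ =>
    rcases List.append_cons_eq_append_singleton hX with ⟨rfl, rfl, he⟩ | ⟨K₀, rfl, rfl⟩
    · simp only [Prod.mk.injEq] at he
      obtain ⟨rfl, rfl, rfl⟩ := he
      have c₁ :=
        IHk _ (by omega) (by omega) (Multiset.Subset.trans hΛ (Multiset.subset_cons _ _)) hq₁
      rw [Multiset.add_cons] at c₁
      exact .boxR1 e c₁ (IHk _ (by omega) (by omega) hΛ hq₂)
    · simp only [List.append_assoc, List.cons_append] at hq₁ hq₂
      rw [← List.cons_append, ← List.append_assoc]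
      exact .boxR1 e (by simpa using IHk _ (by omega) (by omega) hΛ hq₁)
        (by simpa using IHk _ (by omega) (by omega) hΛ hq₂)
  | boxR2 e hlast hq =>
    subst hX
    simp only [List.append_assoc, List.cons_append] at hq
    refine .boxR2 e ?_ (by simpa using IHk _ (by omega) (by omega) hΛ hq)
    rwa [lastDir_congr (H := H ++ (A ::ₘ Θ, Λ', d) :: K) (by simp [dirs_merge hd, hd])]
  | boxL1 e hq =>
    rcases List.append_cons_eq_append_singleton hX with ⟨rfl, rfl, he⟩ | ⟨K₀, rfl, rfl⟩
    · simp only [Prod.mk.injEq] at he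
      obtain ⟨he, rfl, rfl⟩ := he
      rw [← he] at hq
      have c := IHk _ (by omega) (by omega) hΛ hq
      rcases Multiset.cons_eq_cons.1 he with ⟨rfl, -⟩ | ⟨-, Θ₀, rfl, -⟩
      · -- `A = e.box B` is consumed: cut `B` between `hP` and `c`, then contract the two copies
        have p := (hP _ rfl).of_subset ((Ctx.Subset.refl _).concat (.refl _)
          (Multiset.add_subset_add_left Δ hΛ)) (.refl _) (.refl _)
        have cut := FDeriv.cut (ih.1 _ (Dir.sizeOf_lt_box _ _)) rfl p c
        rw [zero_add, zero_add] at cut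
        exact cut.of_subset (.merge (.refl _) (.refl _)) (.refl _) (.refl _)
      · rw [Multiset.add_cons] at c ⊢
        exact .boxL1 _ c
    · simp only [List.append_assoc, List.cons_append] at hq
      rw [← List.cons_append, ← List.append_assoc]
      exact .boxL1 e (by simpa using IHk _ (by omega) (by omega) hΛ hq)
  | boxL2 e a b hq =>
    rcases List.append_cons_eq_append_singleton hX with ⟨rfl, rfl, he⟩ | ⟨K₀, rfl, rfl⟩
    · simp only [Prod.mk.injEq] at he
      obtain ⟨rfl, rfl, rfl⟩ := he
      rw [Multiset.cons_swap] at hq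
      have c := (ih.2 N _ (by omega)).1 hd h1 hq
      rw [Multiset.add_cons] at c
      exact .boxL2 e a b c
    · rw [← List.cons_append, ← List.append_assoc]
      exact .boxL2 e a b (IHk _ (by omega) (by omega) hΛ hq)

/-- Cut with `A` principal in `h1`, by cases on `h2`; `hP`, `hImp` and `hBox` are what the rule
introducing `A` in `h1` provides. -/
theorem cutFinal_of_principal_left {A : Formula} {n m : ℕ} {G H : Ctx}
    {Γ Δ Θ Λ : Multiset Formula} (ih : CutBelow A (n + m)) (h1 : HDeriv n G Γ (A ::ₘ Δ))
    (h2 : HDeriv m H (A ::ₘ Θ) Λ) (hd : dirs G = dirs H) (hA : A ≠ .bot)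
    (hP : ∀ (d : Dir) B, A = d.box B → FDeriv (Ctx.merge G H ++ [(Γ + Θ, Δ + Λ, d)]) 0 {B})
    (hImp : ∀ E F m₀, A = E.imp F → m₀ < m → HDeriv m₀ H (F ::ₘ A ::ₘ Θ) Λ →
      HDeriv m₀ H (A ::ₘ Θ) (E ::ₘ Λ) → FDeriv (Ctx.merge G H) (Γ + Θ) (Δ + Λ))
    (hBox : ∀ (d : Dir) B H₀ Θ₀ Λ₀, A = d.box B → H = H₀ ++ [(Θ₀, Λ₀, d.flip)] →
      FDeriv H₀ (B ::ₘ Θ₀) Λ₀ → FDeriv (Ctx.merge G H) (Γ + Θ) (Δ + Λ)) :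
    FDeriv (Ctx.merge G H) (Γ + Θ) (Δ + Λ) := by
  have cut {m₀ H' Θ' Λ'} (hm : m₀ < m) (hd' : dirs G = dirs H') (q : HDeriv m₀ H' (A ::ₘ Θ') Λ') :=
    (ih.2 n m₀ (by omega)).1 hd' h1 q
  generalize hS : A ::ₘ Θ = S at h2
  cases h2 with
  | id _ _ Θ₁ Λ₁ p =>
    rcases Multiset.cons_eq_cons.1 hS with ⟨rfl, rfl⟩ | ⟨-, Θ₀, rfl, -⟩
    · exact ⟨n, h1.of_subset (Ctx.subset_merge_left hd) Multiset.subset_add_left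
        (Multiset.cons_subset.2 ⟨by simp, Multiset.subset_add_left⟩)⟩
    · rw [Multiset.add_cons, Multiset.add_cons]
      exact .id ..
  | botL =>
    rcases Multiset.cons_eq_cons.1 hS with ⟨rfl, -⟩ | ⟨-, Θ₀, rfl, -⟩
    · exact absurd rfl hA
    · rw [Multiset.add_cons]
      exact .botL ..
  | ew e a b hq =>
    obtain ⟨G₀, a', b', rfl, hd₀, hM⟩ := Ctx.merge_concat_right hd
    rw [hM]
    exact .ew e _ _ ⟨_, hq.of_subset (Ctx.subset_merge_right hd₀) Multiset.subset_add_right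
      Multiset.subset_add_right⟩
  | impR hq =>
    subst hS
    rw [Multiset.cons_swap] at hq
    have c := cut (by omega) hd hq
    simp only [Multiset.add_cons] at c ⊢
    exact .impR c
  | impL hq₁ hq₂ =>
    rcases Multiset.cons_eq_cons.1 hS with ⟨rfl, rfl⟩ | ⟨-, Θ₀, rfl, rfl⟩
    · exact hImp _ _ _ rfl (by omega) hq₁ hq₂
    · rw [Multiset.cons_swap _ A, Multiset.cons_swap _ A] at hq₁
      rw [Multiset.cons_swap _ A] at hq₂
      have c₁ := cut (by omega) hd hq₁
      have c₂ := cut (by omega) hd hq₂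
      simp only [Multiset.add_cons] at c₁ c₂ ⊢
      exact .impL c₁ c₂
  | boxR1 e hq₁ hq₂ =>
    subst hS
    have c₁ := cut (by omega) (by simpa using hd) hq₁
    rw [List.append_cons] at hq₂
    have c₂ := cut_ctx (K := []) ih h1 hd (hP e) _ (by omega) (.refl _) hq₂
    obtain ⟨G₀, a, b, rfl, hd₀, hM⟩ := Ctx.merge_concat_right hd
    rw [Ctx.merge_concat (length_eq_of_dirs_eq hd₀)] at c₁
    rw [hM] at c₂ ⊢
    simp only [Multiset.add_cons] at c₁ c₂ ⊢
    exact .boxR1 e c₁ (by simpa using c₂)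
  | boxR2 e hlast hq =>
    subst hS
    have c := cut_ctx (K := []) ih h1 hd (hP e) _ (by omega) (.refl _) hq
    rw [Multiset.add_cons] at c ⊢
    exact .boxR2 e (by rwa [lastDir_congr ((dirs_merge hd).trans hd)]) c
  | boxL1 e hq =>
    subst hS
    rw [Multiset.cons_swap] at hq
    have c := cut (by omega) hd hq
    obtain ⟨G₀, a, b, rfl, hd₀, hM⟩ := Ctx.merge_concat_right hd
    rw [hM] at c ⊢
    simp only [Multiset.add_cons] at c ⊢
    exact .boxL1 e c
  | boxL2 e Θ₁ Λ₁ hq =>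
    rcases Multiset.cons_eq_cons.1 hS with ⟨rfl, rfl⟩ | ⟨-, Θ₀, rfl, -⟩
    · exact hBox e _ _ _ _ rfl rfl ⟨_, hq⟩
    · obtain ⟨G₀, a, b, rfl, hd₀, hM⟩ := Ctx.merge_concat_right hd
      rw [hM, Multiset.add_cons]
      exact .boxL2 e _ _ ⟨_, hq.of_subset (Ctx.subset_merge_right hd₀)
        (Multiset.cons_subset_cons Multiset.subset_add_right) Multiset.subset_add_right⟩

theorem cutFinal_impR {E F : Formula} {n m : ℕ} {G H : Ctx} {Γ Δ Θ Λ : Multiset Formula}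
    (ih : CutBelow (E.imp F) (n + 1 + m)) (p : HDeriv n G (E ::ₘ Γ) (F ::ₘ E.imp F ::ₘ Δ))
    (h2 : HDeriv m H (E.imp F ::ₘ Θ) Λ) (hd : dirs G = dirs H) :
    FDeriv (Ctx.merge G H) (Γ + Θ) (Δ + Λ) := by
  refine cutFinal_of_principal_left ih (.impR p) h2 hd (by simp) ?_ ?_ ?_
  · intro d B h
    cases d <;> cases h
  · intro E' F' m₀ h hm q₁ q₂
    obtain ⟨rfl, rfl⟩ := Formula.imp.inj h
    have hE : sizeOf E < sizeOf (E.imp F) := by simp only [Formula.imp.sizeOf_spec]; omega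
    have hF : sizeOf F < sizeOf (E.imp F) := by simp only [Formula.imp.sizeOf_spec]; omega
    -- three cuts on `E → F` of smaller height, then cuts on `E` and on `F`
    rw [Multiset.cons_swap] at q₁
    have c₁ := (ih.2 _ m₀ (by omega)).1 hd (.impR p) q₁
    have c₂ := (ih.2 _ m₀ (by omega)).1 hd (.impR p) q₂
    rw [Multiset.cons_swap] at p
    have c₃ := (ih.2 n m (by omega)).1 hd p h2
    rw [Multiset.add_cons] at c₁ c₂
    rw [Multiset.cons_add, Multiset.cons_add] at c₃
    have cE := FDeriv.cut (ih.1 E hE) rfl c₂ c₃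
    rw [Multiset.add_cons] at cE
    have cF := FDeriv.cut (ih.1 F hF) (dirs_merge rfl) cE c₁
    exact cF.of_subset (.merge (.merge (.refl _) (.refl _)) (.refl _))
      (Multiset.add_subset (Multiset.add_self_subset _) (.refl _))
      (Multiset.add_subset (Multiset.add_self_subset _) (.refl _))
  · intro d B
    cases d <;> simp [Dir.box]

theorem cutFinal_boxR1 {d : Dir} {B : Formula} {n m : ℕ} {G H : Ctx}
    {Γ₀ Δ₀ Γ Δ Θ Λ : Multiset Formula} (ih : CutBelow (d.box B) (n + 1 + m))
    (p₁ : HDeriv n (G ++ [(Γ₀, B ::ₘ Δ₀, d.flip)]) Γ (d.box B ::ₘ Δ))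
    (p₂ : HDeriv n (G ++ [(Γ₀, Δ₀, d.flip), (Γ, d.box B ::ₘ Δ, d)]) 0 {B})
    (h2 : HDeriv m H (d.box B ::ₘ Θ) Λ) (hd : dirs (G ++ [(Γ₀, Δ₀, d.flip)]) = dirs H) :
    FDeriv (Ctx.merge (G ++ [(Γ₀, Δ₀, d.flip)]) H) (Γ + Θ) (Δ + Λ) := by
  refine cutFinal_of_principal_left ih (.boxR1 d p₁ p₂) h2 hd (by cases d <;> simp [Dir.box])
    ?_ ?_ ?_
  · intro e B' h
    obtain ⟨rfl, rfl⟩ := Dir.box_inj.1 h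
    rw [List.append_cons] at p₂
    exact (ih.2 n m (by omega)).2 hd p₂ h2
  · intro E F _ h
    cases d <;> cases h
  · intro e B' H₀ Θ₀ Λ₀ h hH q
    obtain ⟨rfl, rfl⟩ := Dir.box_inj.1 h
    subst hH
    have hd₀ : dirs G = dirs H₀ := by simpa using hd
    -- cut `d.box B` between `p₁` and `h2`, then `B` against `q`, and contract the copy of `H₀`
    have c := (ih.2 n m (by omega)).1 (by simpa using hd) p₁ h2
    rw [Ctx.merge_concat (length_eq_of_dirs_eq hd₀), Multiset.cons_add] at c
    have c' := FDeriv.cut_trailing (K := []) (ih.1 B (Dir.sizeOf_lt_box d B))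
      ((dirs_merge hd₀).trans hd₀) c q
    rw [Ctx.merge_concat (length_eq_of_dirs_eq hd₀)]
    exact c'.of_subset ((Ctx.Subset.merge (.refl _) (Ctx.subset_merge_right hd₀)).concat
      (Multiset.add_subset (.refl _) Multiset.subset_add_right)
      (Multiset.add_subset (.refl _) Multiset.subset_add_right)) (.refl _) (.refl _)

theorem cutFinal_boxR2 {d : Dir} {B : Formula} {n m : ℕ} {G H : Ctx}
    {Γ Δ Θ Λ : Multiset Formula} (ih : CutBelow (d.box B) (n + 1 + m))
    (hG : lastDir G ≠ some d.flip) (p : HDeriv n (G ++ [(Γ, d.box B ::ₘ Δ, d)]) 0 {B})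
    (h2 : HDeriv m H (d.box B ::ₘ Θ) Λ) (hd : dirs G = dirs H) :
    FDeriv (Ctx.merge G H) (Γ + Θ) (Δ + Λ) := by
  refine cutFinal_of_principal_left ih (.boxR2 d hG p) h2 hd (by cases d <;> simp [Dir.box])
    ?_ ?_ ?_
  · intro e B' h
    obtain ⟨rfl, rfl⟩ := Dir.box_inj.1 h
    exact (ih.2 n m (by omega)).2 hd p h2
  · intro E F _ h
    cases d <;> cases h
  · -- the right premise would end in a component joined by `d.flip`, which `hG` excludes
    intro e B' H₀ Θ₀ Λ₀ h hH
    obtain ⟨rfl, rfl⟩ := Dir.box_inj.1 h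
    subst hH
    exact absurd (by simp [lastDir_eq_getLast?, hd]) hG

theorem cutFinal_of_cutBelow {A : Formula} {n m : ℕ} (ih : CutBelow A (n + m)) :
    CutFinal A n m := by
  intro G H Γ Δ Θ Λ hd h1 h2
  have cut {n₀} (hn : n₀ < n) : Cut A n₀ m := ih.2 n₀ m (by omega)
  generalize hS : A ::ₘ Δ = S at h1
  cases h1 with
  | id _ _ Γ₁ Δ₁ p =>
    rcases Multiset.cons_eq_cons.1 hS with ⟨rfl, rfl⟩ | ⟨-, Δ₀, rfl, -⟩
    · exact ⟨m, h2.of_subset (Ctx.subset_merge_right hd)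
        (Multiset.cons_subset.2 ⟨by simp, Multiset.subset_add_right⟩) Multiset.subset_add_right⟩
    · rw [Multiset.cons_add, Multiset.cons_add]
      exact .id ..
  | botL =>
    rw [Multiset.cons_add]
    exact .botL ..
  | ew e a b hq =>
    obtain ⟨H₀, a', b', rfl, hd₀, hM⟩ := Ctx.merge_concat_left hd
    rw [hM]
    exact .ew e _ _ ⟨_, hq.of_subset (Ctx.subset_merge_left hd₀) Multiset.subset_add_left
      Multiset.subset_add_left⟩
  | impR hq =>
    rcases Multiset.cons_eq_cons.1 hS with ⟨rfl, rfl⟩ | ⟨-, Δ₀, rfl, rfl⟩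
    · exact cutFinal_impR ih hq h2 hd
    · rw [Multiset.cons_swap _ A, Multiset.cons_swap _ A] at hq
      have c := (cut (by omega)).1 hd hq h2
      simp only [Multiset.cons_add] at c ⊢
      exact .impR c
  | impL hq₁ hq₂ =>
    subst hS
    rw [Multiset.cons_swap] at hq₂
    have c₁ := (cut (by omega)).1 hd hq₁ h2
    have c₂ := (cut (by omega)).1 hd hq₂ h2
    simp only [Multiset.cons_add] at c₁ c₂ ⊢
    exact .impL c₁ c₂
  | boxR1 e hq₁ hq₂ =>
    rcases Multiset.cons_eq_cons.1 hS with ⟨rfl, rfl⟩ | ⟨-, Δ₀, rfl, rfl⟩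
    · exact cutFinal_boxR1 ih hq₁ hq₂ h2 hd
    · rw [Multiset.cons_swap] at hq₁
      rw [Multiset.cons_swap, List.append_cons] at hq₂
      have c₁ := (cut (by omega)).1 (by simpa using hd) hq₁ h2
      have c₂ := (cut (by omega)).2 hd hq₂ h2
      obtain ⟨H₀, a, b, rfl, hd₀, hM⟩ := Ctx.merge_concat_left hd
      rw [Ctx.merge_concat (length_eq_of_dirs_eq hd₀)] at c₁
      rw [hM] at c₂ ⊢
      simp only [Multiset.cons_add] at c₁ c₂ ⊢
      exact .boxR1 e c₁ (by simpa using c₂)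
  | boxR2 e hlast hq =>
    rcases Multiset.cons_eq_cons.1 hS with ⟨rfl, rfl⟩ | ⟨-, Δ₀, rfl, rfl⟩
    · exact cutFinal_boxR2 ih hlast hq h2 hd
    · rw [Multiset.cons_swap] at hq
      have c := (cut (by omega)).2 (K := []) hd hq h2
      simp only [Multiset.cons_add] at c ⊢
      exact .boxR2 e (by rwa [lastDir_congr (dirs_merge hd)]) c
  | boxL1 e hq =>
    subst hS
    have c := (cut (by omega)).1 hd hq h2
    obtain ⟨H₀, a, b, rfl, hd₀, hM⟩ := Ctx.merge_concat_left hd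
    rw [hM] at c ⊢
    simp only [Multiset.cons_add] at c ⊢
    exact .boxL1 e c
  | boxL2 e a b hq =>
    subst hS
    obtain ⟨H₀, a', b', rfl, hd₀, hM⟩ := Ctx.merge_concat_left hd
    rw [hM, Multiset.cons_add]
    exact .boxL2 e _ _ ⟨_, hq.of_subset (Ctx.subset_merge_left hd₀)
      (Multiset.cons_subset_cons Multiset.subset_add_left) Multiset.subset_add_left⟩

theorem cut_admissible (A : Formula) (n m : ℕ) : Cut A n m := by
  induction A using (measure (sizeOf : Formula → ℕ)).wf.induction generalizing n m with
  | _ A ihA =>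
  induction hs : n + m using Nat.strong_induction_on generalizing n m with
  | _ s ihs =>
  have ih : CutBelow A (n + m) := ⟨ihA, fun n' m' h => ihs _ (by omega) n' m' rfl⟩
  exact ⟨cutFinal_of_cutBelow ih, cutTrailing_of_lt fun n₀ h => ih.2 n₀ m (by omega)⟩

theorem dirs_eq_of_structEquiv {G H : Ctx} {a b c e : Multiset Formula}
    (h : structEquiv (plug G (.single a b)) (plug H (.single c e))) : dirs G = dirs H := by
  induction G generalizing H with
  | nil =>
    cases H with
    | nil => rfl
    | cons y H => obtain ⟨_, _, _ | _⟩ := y <;> simp [plug, structEquiv] at h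
  | cons x G ih =>
    cases H with
    | nil => obtain ⟨_, _, _ | _⟩ := x <;> simp [plug, structEquiv] at h
    | cons y H =>
      obtain ⟨_, _, _ | _⟩ := x <;> obtain ⟨_, _, _ | _⟩ := y <;>
        simp only [plug, structEquiv] at h <;> simp [ih h]

theorem merge_plug {G H : Ctx} (h : dirs G = dirs H) (a b c e : Multiset Formula) :
    merge (plug G (.single a b)) (plug H (.single c e)) =
      plug (Ctx.merge G H) (.single (a + c) (b + e)) := by
  induction G generalizing H with
  | nil =>
    cases H with
    | nil => rfl
    | cons => simp at h
  | cons x G ih =>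
    cases H with
    | nil => simp at h
    | cons y H =>
      obtain ⟨_, _, d⟩ := x
      obtain ⟨_, _, d'⟩ := y
      simp only [dirs_cons, List.cons.injEq] at h
      obtain ⟨rfl, h⟩ := h
      cases d <;> simp [plug, merge, Ctx.merge, ih h]

theorem snoc_plug (G : Ctx) (a b u v : Multiset Formula) (d : Dir) :
    (plug G (.single a b)).snoc d u v = plug (G ++ [(a, b, d)]) (.single u v) := by
  induction G with
  | nil => cases d <;> rfl
  | cons x G ih => obtain ⟨_, _, _ | _⟩ := x <;> simp [plug, LNS.snoc, ih]

theorem exists_appendT_plug (d : Dir) (u v : Multiset Formula) (I : TCtx) :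
    ∃ K c e, ∀ G a b,
      appendT (plug G (.single a b)) ((d, u, v) :: I) =
        plug (G ++ (a, b, d) :: K) (.single c e) := by
  induction I generalizing d u v with
  | nil => exact ⟨[], u, v, fun G a b => snoc_plug ..⟩
  | cons x I ih =>
    obtain ⟨d', u', v'⟩ := x
    obtain ⟨K, c, e, hK⟩ := ih d' u' v'
    refine ⟨(u, v, d') :: K, c, e, fun G a b => ?_⟩
    show appendT ((plug G (.single a b)).snoc d u v) ((d', u', v') :: I) = _
    rw [snoc_plug, hK]
    simp

/-- Cut elimination with trailing context (statement SL of the main lemma):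
from derivations of `G ⇗ Γ ⇒ Δ,A ⇗ I` and `H ⇗ A,Θ ⇒ Λ`, where `G ⇗ Γ ⇒ Δ`
and `H ⇗ A,Θ ⇒ Λ` are structurally equivalent, we get a derivation of
`(G ⊕ H) ⇗ Γ,Θ ⇒ Δ,Λ ⇗ I`. -/
theorem cut_elimination_sl (G H : Ctx) (I : TCtx) (Γ Δ Θ Λ : Multiset Formula)
    (A : Formula)
    (h1 : Deriv (appendT (plug G (.single Γ (A ::ₘ Δ))) I))
    (h2 : Deriv (plug H (.single (A ::ₘ Θ) Λ)))
    (hse : structEquiv (plug G (.single Γ Δ)) (plug H (.single (A ::ₘ Θ) Λ))) :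
    Deriv (appendT (merge (plug G (.single Γ Δ)) (plug H (.single Θ Λ))) I) := by
  have hd := dirs_eq_of_structEquiv hse
  obtain ⟨m, h2⟩ := h2.fDeriv rfl
  rw [merge_plug hd]
  rcases I with _ | ⟨⟨d, u, v⟩, I⟩
  · obtain ⟨n, h1⟩ := h1.fDeriv rfl
    exact ((cut_admissible A n m).1 hd h1 h2).toDeriv
  · obtain ⟨K, c, e, hK⟩ := exists_appendT_plug d u v I
    rw [hK] at h1 ⊢
    obtain ⟨n, h1⟩ := h1.fDeriv rfl
    exact ((cut_admissible A n m).2 hd h1 h2).toDeriv
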